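/- arXiv:1012.1239 — 2 statements merged into one kernel-verified Lean document; each statement's English description precedes it below -/
import Mathlib

section
/- Let u : [0,∞) → ℝ be a bounded function which is twice continuously differentiable on (0,∞), with u, u', u'' extending continuously to 0, and suppose u(0) = 0 and a·u''(0) + b·u'(0) = 0 where a > 0 and b ∈ ℝ. Define F(x) = -x + (b/a)x² for x < 0 and the extension E₀u by (E₀u)(x) = u(x) for x ≥ 0 and (E₀u)(x) = -u(F(x)) for -ε < x < 0, where ε > 0 is small enough that F(x) > 0 on (-ε,0). Then E₀u is twice continuously differentiable on (-ε,∞). -/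
/-!
Away from `0` the extension is `u` or `-u ∘ F`, with `F` mapping `(-ε, 0)` into `(0, ∞)`, so it
is `C²` there, and it is continuous at `0` because `u 0 = 0`. A real function that is `Cⁿ` off a
point, continuous at it, and whose first `n` derivatives have limits there, is `Cⁿ` across it
(by the one-sided derivative extension theorem, inductively). By the chain rule the left limits
of the first two derivatives are `-u'(0) F'(0) = u'(0)` and
`-(u''(0) F'(0)² + u'(0) F''(0)) = -u''(0) - (2b/a) u'(0)`, and the latter equals `u''(0)`
exactly when `a u''(0) + b u'(0) = 0`.
-/

open Set Filter Topology

section Removable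

variable {E : Type*} [NormedAddCommGroup E] [NormedSpace ℝ E] {f : ℝ → E} {s : Set ℝ} {x₀ : ℝ}

theorem hasDerivAt_of_tendsto_deriv_punctured {L : E} (hs : s ∈ 𝓝 x₀)
    (hdiff : DifferentiableOn ℝ f (s \ {x₀})) (hf : ContinuousAt f x₀)
    (hlim : Tendsto (deriv f) (𝓝[≠] x₀) (𝓝 L)) : HasDerivAt f L x₀ := by
  have hs' : s \ {x₀} ∈ 𝓝[≠] x₀ := sdiff_mem_nhdsWithin_compl hs _
  have hright : HasDerivWithinAt f L (Ici x₀) x₀ :=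
    hasDerivWithinAt_Ici_of_tendsto_deriv hdiff hf.continuousWithinAt
      (nhdsWithin_mono _ (fun _ h => ne_of_gt h) hs')
      (hlim.mono_left (nhdsWithin_mono _ fun _ h => ne_of_gt h))
  have hleft : HasDerivWithinAt f L (Iic x₀) x₀ :=
    hasDerivWithinAt_Iic_of_tendsto_deriv hdiff hf.continuousWithinAt
      (nhdsWithin_mono _ (fun _ h => ne_of_lt h) hs')
      (hlim.mono_left (nhdsWithin_mono _ fun _ h => ne_of_lt h))
  simpa using hleft.union hright

theorem contDiffOn_one_of_tendsto_deriv_punctured {L : E} (hs : IsOpen s) (hx₀ : x₀ ∈ s)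
    (hf : ContDiffOn ℝ 1 f (s \ {x₀})) (hcont : ContinuousAt f x₀)
    (hlim : Tendsto (deriv f) (𝓝[≠] x₀) (𝓝 L)) : ContDiffOn ℝ 1 f s := by
  have hs' : IsOpen (s \ {x₀}) := hs.sdiff isClosed_singleton
  have hdiff : DifferentiableOn ℝ f (s \ {x₀}) := hf.differentiableOn one_ne_zero
  have hx₀' : HasDerivAt f L x₀ :=
    hasDerivAt_of_tendsto_deriv_punctured (hs.mem_nhds hx₀) hdiff hcont hlim
  rw [show (1 : WithTop ℕ∞) = 0 + 1 from rfl, contDiffOn_succ_iff_deriv_of_isOpen hs,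
    contDiffOn_zero]
  refine ⟨fun y hy => ?_, by simp, fun y hy => ?_⟩
  · rcases eq_or_ne y x₀ with rfl | hne
    · exact hx₀'.differentiableAt.differentiableWithinAt
    · exact ((hdiff y ⟨hy, hne⟩).differentiableAt
        (hs'.mem_nhds ⟨hy, hne⟩)).differentiableWithinAt
  · rcases eq_or_ne y x₀ with rfl | hne
    · refine ContinuousAt.continuousWithinAt ?_
      rw [← continuousWithinAt_compl_self, ContinuousWithinAt, hx₀'.deriv]
      exact hlim
    · exact ((hf.continuousOn_deriv_of_isOpen hs' le_rfl).continuousAt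
        (hs'.mem_nhds ⟨hy, hne⟩)).continuousWithinAt

theorem contDiffOn_of_tendsto_iteratedDeriv_punctured (hs : IsOpen s) (hx₀ : x₀ ∈ s) {n : ℕ}
    (hf : ContDiffOn ℝ n f (s \ {x₀})) (hcont : ContinuousAt f x₀)
    (hlim : ∀ k, 1 ≤ k → k ≤ n → ∃ L, Tendsto (iteratedDeriv k f) (𝓝[≠] x₀) (𝓝 L)) :
    ContDiffOn ℝ n f s := by
  induction n generalizing f with
  | zero =>
    rw [Nat.cast_zero, contDiffOn_zero] at hf ⊢
    intro y hy
    rcases eq_or_ne y x₀ with rfl | hne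
    · exact hcont.continuousWithinAt
    · exact ((hf y ⟨hy, hne⟩).continuousAt
        ((hs.sdiff isClosed_singleton).mem_nhds ⟨hy, hne⟩)).continuousWithinAt
  | succ n ih =>
    have hs' : IsOpen (s \ {x₀}) := hs.sdiff isClosed_singleton
    obtain ⟨L, hL⟩ := hlim 1 le_rfl (by omega)
    have hf1 : ContDiffOn ℝ 1 f s :=
      contDiffOn_one_of_tendsto_deriv_punctured hs hx₀ (hf.of_le (by exact_mod_cast by omega))
        hcont (by rwa [iteratedDeriv_one] at hL)
    push_cast at hf ⊢
    rw [contDiffOn_succ_iff_deriv_of_isOpen hs]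
    refine ⟨hf1.differentiableOn one_ne_zero, by simp, ih ?_ ?_ fun k hk hkn => ?_⟩
    · exact ((contDiffOn_succ_iff_deriv_of_isOpen hs').1 hf).2.2
    · exact (hf1.continuousOn_deriv_of_isOpen hs le_rfl).continuousAt (hs.mem_nhds hx₀)
    · simpa only [← iteratedDeriv_succ'] using hlim (k + 1) (by omega) (by omega)

end Removable

theorem tendsto_nhdsLT_nhdsGT_of_mapsTo {φ : ℝ → ℝ} {ε : ℝ} (hε : 0 < ε)
    (hφ : ContinuousAt φ 0) (hφ0 : φ 0 = 0) (hmaps : MapsTo φ (Ioo (-ε) 0) (Ioi 0)) :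
    Tendsto φ (𝓝[<] 0) (𝓝[>] 0) :=
  tendsto_nhdsWithin_of_tendsto_nhds_of_eventually_within _
    (by simpa [hφ0] using hφ.tendsto.mono_left nhdsWithin_le_nhds)
    (mem_of_superset (Ioo_mem_nhdsLT (neg_lt_zero.2 hε)) hmaps)

noncomputable def oddExtension (u φ : ℝ → ℝ) (x : ℝ) : ℝ := if 0 ≤ x then u x else -u (φ x)

namespace oddExtension

variable {u φ : ℝ → ℝ}

theorem eqOn_Ioi : EqOn (oddExtension u φ) u (Ioi 0) := fun _ hx =>
  if_pos (le_of_lt hx)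

theorem eqOn_Iio : EqOn (oddExtension u φ) (-(u ∘ φ)) (Iio 0) := fun _ hx =>
  if_neg (not_le.2 hx)

theorem contDiffOn_punctured {n : WithTop ℕ∞} {ε : ℝ} (hu : ContDiffOn ℝ n u (Ioi 0))
    (hφ : ContDiff ℝ n φ) (hφpos : MapsTo φ (Ioo (-ε) 0) (Ioi 0)) :
    ContDiffOn ℝ n (oddExtension u φ) (Ioi (-ε) \ {0}) := by
  have hleft : ContDiffOn ℝ n (oddExtension u φ) (Ioo (-ε) 0) :=
    (hu.comp hφ.contDiffOn hφpos).neg.congr fun _ hx => eqOn_Iio hx.2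
  have hright : ContDiffOn ℝ n (oddExtension u φ) (Ioi 0) := hu.congr eqOn_Ioi
  refine (hleft.union_of_isOpen hright isOpen_Ioo isOpen_Ioi).mono fun x ⟨hx, hx0⟩ => ?_
  rcases lt_or_gt_of_ne hx0 with h | h
  · exact Or.inl ⟨hx, h⟩
  · exact Or.inr h

theorem continuousAt_zero (hu0 : u 0 = 0) (hu : Tendsto u (𝓝[>] 0) (𝓝 0))
    (hφ : Tendsto φ (𝓝[<] 0) (𝓝[>] 0)) : ContinuousAt (oddExtension u φ) 0 := by
  have h0 : oddExtension u φ 0 = 0 := by simp [oddExtension, hu0]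
  rw [continuousAt_iff_continuous_left'_right', ContinuousWithinAt, ContinuousWithinAt, h0]
  constructor
  · have hleft := (hu.comp hφ).neg
    rw [neg_zero] at hleft
    exact hleft.congr' (eqOn_Iio.eventuallyEq_of_mem self_mem_nhdsWithin).symm
  · exact hu.congr' (eqOn_Ioi.eventuallyEq_of_mem self_mem_nhdsWithin).symm

theorem tendsto_iteratedDeriv_nhdsGT {k : ℕ} {L : ℝ}
    (hu : Tendsto (iteratedDeriv k u) (𝓝[>] 0) (𝓝 L)) :
    Tendsto (iteratedDeriv k (oddExtension u φ)) (𝓝[>] 0) (𝓝 L) :=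
  hu.congr' ((eqOn_Ioi.iteratedDeriv_of_isOpen isOpen_Ioi k).eventuallyEq_of_mem
    self_mem_nhdsWithin).symm

variable {u₁ u₂ : ℝ}

theorem tendsto_deriv_nhdsLT (hu : ContDiffOn ℝ 2 u (Ioi 0)) (hφ : ContDiff ℝ 2 φ)
    (hφlim : Tendsto φ (𝓝[<] 0) (𝓝[>] 0)) (hu₁ : Tendsto (deriv u) (𝓝[>] 0) (𝓝 u₁)) :
    Tendsto (deriv (oddExtension u φ)) (𝓝[<] 0) (𝓝 (-(u₁ * deriv φ 0))) := by
  have hφ' := (hφ.continuous_deriv one_le_two).continuousAt (x := 0)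
  refine ((hu₁.comp hφlim).mul (hφ'.tendsto.mono_left nhdsWithin_le_nhds)).neg.congr' ?_
  filter_upwards [self_mem_nhdsWithin, hφlim self_mem_nhdsWithin] with y hy hφy
  have hEy : deriv (oddExtension u φ) y = -deriv (u ∘ φ) y := by
    simpa using (eqOn_Iio.iteratedDeriv_of_isOpen isOpen_Iio 1) hy
  rw [hEy, deriv_comp y ((hu.differentiableOn two_ne_zero).differentiableAt
    (isOpen_Ioi.mem_nhds hφy)) (hφ.differentiable two_ne_zero y)]
  rfl

theorem tendsto_iteratedDeriv_two_nhdsLT (hu : ContDiffOn ℝ 2 u (Ioi 0)) (hφ : ContDiff ℝ 2 φ)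
    (hφlim : Tendsto φ (𝓝[<] 0) (𝓝[>] 0)) (hu₁ : Tendsto (deriv u) (𝓝[>] 0) (𝓝 u₁))
    (hu₂ : Tendsto (iteratedDeriv 2 u) (𝓝[>] 0) (𝓝 u₂)) :
    Tendsto (iteratedDeriv 2 (oddExtension u φ)) (𝓝[<] 0)
      (𝓝 (-(u₂ * deriv φ 0 ^ 2 + u₁ * iteratedDeriv 2 φ 0))) := by
  have hφ' := (hφ.continuous_deriv one_le_two).continuousAt (x := 0)
  have hφ'' := (hφ.continuous_iteratedDeriv 2 le_rfl).continuousAt (x := 0)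
  refine (((hu₂.comp hφlim).mul ((hφ'.tendsto.mono_left nhdsWithin_le_nhds).pow 2)).add
    ((hu₁.comp hφlim).mul (hφ''.tendsto.mono_left nhdsWithin_le_nhds))).neg.congr' ?_
  filter_upwards [self_mem_nhdsWithin, hφlim self_mem_nhdsWithin] with y hy hφy
  have hEy : iteratedDeriv 2 (oddExtension u φ) y = -iteratedDeriv 2 (u ∘ φ) y := by
    simpa using (eqOn_Iio.iteratedDeriv_of_isOpen isOpen_Iio 2) hy
  rw [hEy, iteratedDeriv_comp_two (hu.contDiffAt (isOpen_Ioi.mem_nhds hφy)) hφ.contDiffAt]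
  rfl

theorem tendsto_deriv_nhdsNE (hu : ContDiffOn ℝ 2 u (Ioi 0)) (hφ : ContDiff ℝ 2 φ)
    (hφlim : Tendsto φ (𝓝[<] 0) (𝓝[>] 0)) (hu₁ : Tendsto (deriv u) (𝓝[>] 0) (𝓝 u₁))
    (hφ' : deriv φ 0 = -1) :
    Tendsto (deriv (oddExtension u φ)) (𝓝[≠] 0) (𝓝 u₁) := by
  rw [← nhdsLT_sup_nhdsGT, tendsto_sup]
  refine ⟨?_, by simpa using tendsto_iteratedDeriv_nhdsGT (φ := φ) (k := 1) (by simpa using hu₁)⟩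
  simpa [hφ'] using tendsto_deriv_nhdsLT hu hφ hφlim hu₁

theorem tendsto_iteratedDeriv_two_nhdsNE (hu : ContDiffOn ℝ 2 u (Ioi 0)) (hφ : ContDiff ℝ 2 φ)
    (hφlim : Tendsto φ (𝓝[<] 0) (𝓝[>] 0)) (hu₁ : Tendsto (deriv u) (𝓝[>] 0) (𝓝 u₁))
    (hu₂ : Tendsto (iteratedDeriv 2 u) (𝓝[>] 0) (𝓝 u₂))
    (hφ' : deriv φ 0 = -1) (hcompat : u₁ * iteratedDeriv 2 φ 0 = -2 * u₂) :
    Tendsto (iteratedDeriv 2 (oddExtension u φ)) (𝓝[≠] 0) (𝓝 u₂) := by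
  rw [← nhdsLT_sup_nhdsGT, tendsto_sup]
  refine ⟨?_, tendsto_iteratedDeriv_nhdsGT hu₂⟩
  convert tendsto_iteratedDeriv_two_nhdsLT hu hφ hφlim hu₁ hu₂ using 2
  rw [hφ', hcompat]
  ring

end oddExtension

theorem hasDerivAt_neg_add_mul_sq (c x : ℝ) :
    HasDerivAt (fun x : ℝ => -x + c * x ^ 2) (-1 + 2 * c * x) x :=
  ((hasDerivAt_id' x).fun_neg.fun_add ((hasDerivAt_pow 2 x).const_mul c)).congr_deriv
    (by push_cast; ring)

theorem iteratedDeriv_two_neg_add_mul_sq (c x : ℝ) :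
    iteratedDeriv 2 (fun x : ℝ => -x + c * x ^ 2) x = 2 * c := by
  have hderiv : deriv (fun x : ℝ => -x + c * x ^ 2) = fun x => -1 + 2 * c * x :=
    funext fun x => (hasDerivAt_neg_add_mul_sq c x).deriv
  rw [iteratedDeriv_succ, iteratedDeriv_one, hderiv]
  exact (((hasDerivAt_id' x).const_mul (2 * c)).const_add (-1)).deriv.trans (mul_one _)

theorem stmt_0_general (a b : ℝ) (ha : 0 < a) (u : ℝ → ℝ)
    (hu : ContDiffOn ℝ 2 u (Ioi 0))
    (u1 u2 : ℝ)
    (hcont0 : Tendsto u (nhdsWithin 0 (Ioi 0)) (nhds (u 0)))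
    (hder1 : Tendsto (deriv u) (nhdsWithin 0 (Ioi 0)) (nhds u1))
    (hder2 : Tendsto (deriv (deriv u)) (nhdsWithin 0 (Ioi 0)) (nhds u2))
    (hu0 : u 0 = 0)
    (hbc : a * u2 + b * u1 = 0)
    (ε : ℝ) (hε : 0 < ε)
    (hF : ∀ x ∈ Ioo (-ε) (0 : ℝ), 0 < -x + (b / a) * x ^ 2) :
    ContDiffOn ℝ 2
      (fun x : ℝ => if 0 ≤ x then u x else -u (-x + (b / a) * x ^ 2))
      (Ioi (-ε)) := by
  set F : ℝ → ℝ := fun x => -x + (b / a) * x ^ 2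
  have hF_contDiff : ContDiff ℝ 2 F := by fun_prop
  have hF_lim : Tendsto F (𝓝[<] 0) (𝓝[>] 0) :=
    tendsto_nhdsLT_nhdsGT_of_mapsTo hε hF_contDiff.continuous.continuousAt (by simp [F]) hF
  have hF' : deriv F 0 = -1 := by simpa using (hasDerivAt_neg_add_mul_sq (b / a) 0).deriv
  have hcompat : u1 * iteratedDeriv 2 F 0 = -2 * u2 := by
    rw [iteratedDeriv_two_neg_add_mul_sq]
    field_simp
    linarith
  have hder2' : Tendsto (iteratedDeriv 2 u) (𝓝[>] 0) (𝓝 u2) := by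
    rwa [iteratedDeriv_succ, iteratedDeriv_one]
  change ContDiffOn ℝ 2 (oddExtension u F) (Ioi (-ε))
  refine contDiffOn_of_tendsto_iteratedDeriv_punctured (n := 2) isOpen_Ioi (neg_lt_zero.2 hε)
    (oddExtension.contDiffOn_punctured hu hF_contDiff hF)
    (oddExtension.continuousAt_zero hu0 (by rwa [hu0] at hcont0) hF_lim) fun k hk1 hk2 => ?_
  interval_cases k
  · exact ⟨u1, by simpa using oddExtension.tendsto_deriv_nhdsNE hu hF_contDiff hF_lim hder1 hF'⟩
  · exact ⟨u2, oddExtension.tendsto_iteratedDeriv_two_nhdsNE hu hF_contDiff hF_lim hder1 hder2'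
      hF' hcompat⟩

/-- Squeezed odd reflection of a bounded C² function on the half-line with
boundary condition `u 0 = 0` and `a·u''(0) + b·u'(0) = 0` is C² on `(-ε, ∞)`. -/
theorem stmt_0 (a b : ℝ) (ha : 0 < a) (u : ℝ → ℝ)
    (hbdd : ∃ M : ℝ, ∀ x : ℝ, 0 ≤ x → |u x| ≤ M)
    (hu : ContDiffOn ℝ 2 u (Ioi 0))
    (u1 u2 : ℝ)
    (hcont0 : Tendsto u (nhdsWithin 0 (Ioi 0)) (nhds (u 0)))
    (hder1 : Tendsto (deriv u) (nhdsWithin 0 (Ioi 0)) (nhds u1))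
    (hder2 : Tendsto (deriv (deriv u)) (nhdsWithin 0 (Ioi 0)) (nhds u2))
    (hu0 : u 0 = 0)
    (hbc : a * u2 + b * u1 = 0)
    (ε : ℝ) (hε : 0 < ε)
    (hF : ∀ x ∈ Ioo (-ε) (0 : ℝ), 0 < -x + (b / a) * x ^ 2) :
    ContDiffOn ℝ 2
      (fun x : ℝ => if 0 ≤ x then u x else -u (-x + (b / a) * x ^ 2))
      (Ioi (-ε)) :=
  stmt_0_general a b ha u hu u1 u2 hcont0 hder1 hder2 hu0 hbc ε hε hF
end

section
/- Let Ω ⊆ ℝⁿ, and let V₁, …, V_M be sets with bounded linear extension maps Eᵢ sending bounded functions u : Vᵢ ∩ Ω → ℝ to functions Eᵢu : Vᵢ → ℝ with Eᵢu = u on Vᵢ ∩ Ω and sup_{Vᵢ}|Eᵢu| = sup_{Vᵢ ∩ Ω}|u|. Let η₀, …, η_M : ℝⁿ → [0,1] with support of ηᵢ contained in Vᵢ for i ≥ 1, support of η₀ contained in Ω, Σᵢ ηᵢ = 1 on Ω, and Σᵢ ηᵢ ≤ 1 everywhere. Then Eu := η₀·u + Σ_{i≥1} ηᵢ · Eᵢ(u|_{Vᵢ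 ∩ Ω}) (extended by 0 outside the supports) satisfies Eu = u on Ω and sup_{ℝⁿ}|Eu| = sup_{Ω}|u| for every bounded u : Ω → ℝ. -/
open Set

/-!
At a point `x`, the glued function is a sub-convex combination of the values `u x` and
`f i x`, with weights `η0 x, η i x`. A nonzero weight only occurs where the corresponding
value is available: on `Ω` each such value equals `u x`, and everywhere each such value is
bounded by `S = sup_Ω |u|`, since `sup_{V i} |f i| = sup_{V i ∩ Ω} |u| ≤ S`. Hence the glued
function equals `u` on `Ω` and is bounded by `S`, which forces its supremum to be `S`.
-/

section Weights

variable {ι : Type*} (s : Finset ι) {w g : ι → ℝ}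

lemma Finset.sum_mul_eq_of_sum_eq_one {a : ℝ} (hw : ∑ i ∈ s, w i = 1)
    (hg : ∀ i ∈ s, w i ≠ 0 → g i = a) : ∑ i ∈ s, w i * g i = a := by
  calc ∑ i ∈ s, w i * g i = ∑ i ∈ s, w i * a := by
        refine Finset.sum_congr rfl fun i hi => ?_
        rcases eq_or_ne (w i) 0 with h | h
        · simp [h]
        · rw [hg i hi h]
    _ = a := by rw [← Finset.sum_mul, hw, one_mul]

lemma Finset.abs_sum_mul_le_of_sum_le_one {S : ℝ} (hw₀ : ∀ i ∈ s, 0 ≤ w i)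
    (hw : ∑ i ∈ s, w i ≤ 1) (hS : 0 ≤ S) (hg : ∀ i ∈ s, w i ≠ 0 → |g i| ≤ S) :
    |∑ i ∈ s, w i * g i| ≤ S := by
  have hterm : ∀ i ∈ s, |w i * g i| ≤ w i * S := by
    intro i hi
    rcases eq_or_ne (w i) 0 with h | h
    · simp [h]
    · rw [abs_mul, abs_of_nonneg (hw₀ i hi)]
      exact mul_le_mul_of_nonneg_left (hg i hi h) (hw₀ i hi)
  calc |∑ i ∈ s, w i * g i| ≤ ∑ i ∈ s, w i * S :=
        (Finset.abs_sum_le_sum_abs _ _).trans (Finset.sum_le_sum hterm)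
    _ = (∑ i ∈ s, w i) * S := (Finset.sum_mul _ _ _).symm
    _ ≤ 1 * S := mul_le_mul_of_nonneg_right hw hS
    _ = S := one_mul S

end Weights

section Suprema

variable {X : Type*}

lemma sSup_abs_image_nonneg (u : X → ℝ) (Ω : Set X) : 0 ≤ sSup ((fun x => |u x|) '' Ω) :=
  Real.sSup_nonneg <| by rintro _ ⟨x, -, rfl⟩; exact abs_nonneg _

variable {u : X → ℝ} {Ω : Set X}

lemma abs_le_sSup_abs_image_of_sSup_eq {f : X → ℝ} {V : Set X}
    (hf : BddAbove ((fun x => |f x|) '' V)) (hu : BddAbove ((fun x => |u x|) '' Ω))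
    (hsup : sSup ((fun x => |f x|) '' V) = sSup ((fun x => |u x|) '' (V ∩ Ω)))
    {x : X} (hx : x ∈ V) : |f x| ≤ sSup ((fun x => |u x|) '' Ω) := by
  refine (le_csSup hf ⟨x, hx, rfl⟩).trans (hsup ▸ Real.sSup_le ?_ (sSup_abs_image_nonneg u Ω))
  rintro _ ⟨y, hy, rfl⟩
  exact le_csSup hu ⟨y, hy.2, rfl⟩

lemma sSup_abs_image_univ_eq_of_eqOn {E : X → ℝ} (hEu : EqOn E u Ω)
    (hE : ∀ x, |E x| ≤ sSup ((fun x => |u x|) '' Ω)) :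
    sSup ((fun x => |E x|) '' univ) = sSup ((fun x => |u x|) '' Ω) := by
  have hE_bdd : BddAbove ((fun x => |E x|) '' univ) := ⟨_, by rintro _ ⟨x, -, rfl⟩; exact hE x⟩
  refine le_antisymm (Real.sSup_le (by rintro _ ⟨x, -, rfl⟩; exact hE x)
    (sSup_abs_image_nonneg u Ω)) (Real.sSup_le ?_ (sSup_abs_image_nonneg E univ))
  rintro _ ⟨x, hx, rfl⟩
  exact (congrArg abs (hEu hx)).ge.trans (le_csSup hE_bdd ⟨x, mem_univ x, rfl⟩)

end Suprema

theorem stmt_12_general (n M : ℕ) (Ω : Set (EuclideanSpace ℝ (Fin n)))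
    (V : Fin M → Set (EuclideanSpace ℝ (Fin n)))
    (u : EuclideanSpace ℝ (Fin n) → ℝ) (K : ℝ) (hu : ∀ x ∈ Ω, |u x| ≤ K)
    (f : Fin M → EuclideanSpace ℝ (Fin n) → ℝ)
    (hf_eq : ∀ i, ∀ x ∈ V i ∩ Ω, f i x = u x)
    (hf_bdd : ∀ i, ∃ Ki : ℝ, ∀ x ∈ V i, |f i x| ≤ Ki)
    (hf_sup : ∀ i, sSup ((fun x => |f i x|) '' V i) =
      sSup ((fun x => |u x|) '' (V i ∩ Ω)))
    (η0 : EuclideanSpace ℝ (Fin n) → ℝ) (η : Fin M → EuclideanSpace ℝ (Fin n) → ℝ)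
    (hη0_range : ∀ x, η0 x ∈ Icc (0 : ℝ) 1)
    (hη_range : ∀ i x, η i x ∈ Icc (0 : ℝ) 1)
    (hsupp0 : Function.support η0 ⊆ Ω)
    (hsupp : ∀ i, Function.support (η i) ⊆ V i)
    (hsum1 : ∀ x ∈ Ω, η0 x + ∑ i, η i x = 1)
    (hsum_le : ∀ x, η0 x + ∑ i, η i x ≤ 1) :
    (∀ x ∈ Ω, η0 x * u x + ∑ i, η i x * f i x = u x) ∧
    sSup ((fun x => |η0 x * u x + ∑ i, η i x * f i x|) '' univ) =
      sSup ((fun x => |u x|) '' Ω) := by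
  have hu_bdd : BddAbove ((fun x => |u x|) '' Ω) := ⟨K, by rintro _ ⟨x, hx, rfl⟩; exact hu x hx⟩
  have hf_le : ∀ i, ∀ x ∈ V i, |f i x| ≤ sSup ((fun x => |u x|) '' Ω) := fun i x hx =>
    have ⟨Ki, hKi⟩ := hf_bdd i
    abs_le_sSup_abs_image_of_sSup_eq ⟨Ki, by rintro _ ⟨y, hy, rfl⟩; exact hKi y hy⟩ hu_bdd
      (hf_sup i) hx
  let w (x) (j : Option (Fin M)) : ℝ := j.elim (η0 x) (η · x)
  let g (x) (j : Option (Fin M)) : ℝ := j.elim (u x) (f · x)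
  have hglue : ∀ x, η0 x * u x + ∑ i, η i x * f i x = ∑ j, w x j * g x j :=
    fun x => (Fintype.sum_option fun j => w x j * g x j).symm
  have hw : ∀ x, ∑ j, w x j = η0 x + ∑ i, η i x := fun x => Fintype.sum_option _
  have hagree : ∀ x ∈ Ω, η0 x * u x + ∑ i, η i x * f i x = u x := by
    intro x hx
    rw [hglue]
    refine Finset.sum_mul_eq_of_sum_eq_one _ (hw x ▸ hsum1 x hx) ?_
    rintro (_ | i) - h
    · rfl
    · exact hf_eq i x ⟨hsupp i h, hx⟩
  refine ⟨hagree, sSup_abs_image_univ_eq_of_eqOn hagree fun x => ?_⟩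
  rw [hglue]
  refine Finset.abs_sum_mul_le_of_sum_le_one _ ?_ (hw x ▸ hsum_le x) (sSup_abs_image_nonneg u Ω) ?_
  · rintro (_ | i) -
    exacts [(hη0_range x).1, (hη_range i x).1]
  · rintro (_ | i) - h
    · exact le_csSup hu_bdd ⟨x, hsupp0 h, rfl⟩
    · exact hf_le i x (hsupp i h)

/-- Gluing local contractive extensions by a partition of unity yields a global
extension with the same supremum norm. -/
theorem stmt_12 (n M : ℕ) (Ω : Set (EuclideanSpace ℝ (Fin n))) (hΩ : Ω.Nonempty)
    (V : Fin M → Set (EuclideanSpace ℝ (Fin n)))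
    (u : EuclideanSpace ℝ (Fin n) → ℝ) (K : ℝ) (hu : ∀ x ∈ Ω, |u x| ≤ K)
    (f : Fin M → EuclideanSpace ℝ (Fin n) → ℝ)
    (hf_eq : ∀ i, ∀ x ∈ V i ∩ Ω, f i x = u x)
    (hf_bdd : ∀ i, ∃ Ki : ℝ, ∀ x ∈ V i, |f i x| ≤ Ki)
    (hf_sup : ∀ i, sSup ((fun x => |f i x|) '' V i) =
      sSup ((fun x => |u x|) '' (V i ∩ Ω)))
    (η0 : EuclideanSpace ℝ (Fin n) → ℝ) (η : Fin M → EuclideanSpace ℝ (Fin n) → ℝ)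
    (hη0_range : ∀ x, η0 x ∈ Icc (0 : ℝ) 1)
    (hη_range : ∀ i x, η i x ∈ Icc (0 : ℝ) 1)
    (hsupp0 : Function.support η0 ⊆ Ω)
    (hsupp : ∀ i, Function.support (η i) ⊆ V i)
    (hsum1 : ∀ x ∈ Ω, η0 x + ∑ i, η i x = 1)
    (hsum_le : ∀ x, η0 x + ∑ i, η i x ≤ 1) :
    (∀ x ∈ Ω, η0 x * u x + ∑ i, η i x * f i x = u x) ∧
    sSup ((fun x => |η0 x * u x + ∑ i, η i x * f i x|) '' univ) =
      sSup ((fun x => |u x|) '' Ω) :=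
  stmt_12_general n M Ω V u K hu f hf_eq hf_bdd hf_sup η0 η hη0_range hη_range hsupp0 hsupp hsum1
    hsum_le
end
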